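/- arXiv:0908.4560 — 2 statements merged into one kernel-verified Lean document; each statement's English description precedes it below -/
import Mathlib

section
/- Let p ≥ 1 and α_1,…,α_p ∈ [0,1] with α_p > 0, and let A be the associated p×p companion matrix. Then ρ(A) < 1 if and only if Σ_{k=1}^p α_k < 1, ρ(A) = 1 if and only if Σ_{k=1}^p α_k = 1, and ρ(A) > 1 if and only if Σ_{k=1}^p α_k > 1. -/
open Matrix

noncomputable section

/-- The companion matrix with first row `(α_1, …, α_p)` and subdiagonal entries `1`. -/
def companion (p : ℕ) (α : Fin p → ℝ) : Matrix (Fin p) (Fin p) ℝ :=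
  Matrix.of fun i j => if (i : ℕ) = 0 then α j else if (i : ℕ) = (j : ℕ) + 1 then 1 else 0

/-- The spectral radius of a real matrix: the maximum (supremum) of the moduli of its
complex eigenvalues. -/
def specRad {p : ℕ} (A : Matrix (Fin p) (Fin p) ℝ) : ℝ :=
  sSup {r : ℝ | ∃ z ∈ spectrum ℂ (A.map (Complex.ofReal : ℝ → ℂ)), ‖z‖ = r}

/-!
The eigenvalues of the companion matrix are the roots of `z ^ p = ∑ α_k z ^ (p - 1 - k)`, with
eigenvectors `(z ^ (p - 1), …, z, 1)`. Put `S = ∑ α_k`. Since the weights are nonnegative, a root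
with `1 ≤ ‖z‖` satisfies `‖z‖ ^ p ≤ S ‖z‖ ^ (p - 1)`, so `‖z‖ ≤ S`. Hence for `S < 1` all roots lie
in the open unit disc (and there are finitely many), and for `S = 1` they lie in the closed disc
and `1` is a root. For `S > 1`, `t ^ p - ∑ α_k t ^ (p - 1 - k)` is negative at `t = 1` and
nonnegative at `t = S`, so it has a real root in `(1, S]`.
-/

theorem Matrix.mem_spectrum_iff_exists_mulVec_eq_smul {n K : Type*} [Fintype n] [DecidableEq n]
    [Field K] {A : Matrix n n K} {μ : K} : μ ∈ spectrum K A ↔ ∃ v ≠ 0, A *ᵥ v = μ • v := by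
  rw [← Matrix.spectrum_toLin', ← Module.End.hasEigenvalue_iff_mem_spectrum,
    Module.End.hasEigenvalue_iff, Submodule.ne_bot_iff]
  simp only [Module.End.mem_eigenspace_iff, Matrix.toLin'_apply]
  exact ⟨fun ⟨v, h, hv⟩ => ⟨v, hv, h⟩, fun ⟨v, hv, h⟩ => ⟨v, h, hv⟩⟩

theorem trichotomy_iffs {α β : Type*} [LinearOrder α] [LinearOrder β] {a a₀ : α} {b b₀ : β}
    (hlt : a < a₀ → b < b₀) (heq : a = a₀ → b = b₀) (hgt : a₀ < a → b₀ < b) :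
    (b < b₀ ↔ a < a₀) ∧ (b = b₀ ↔ a = a₀) ∧ (b₀ < b ↔ a₀ < a) := by
  rcases lt_trichotomy a a₀ with h | h | h
  · have := hlt h
    exact ⟨iff_of_true this h, iff_of_false this.ne h.ne, iff_of_false this.not_gt h.not_gt⟩
  · have := heq h
    exact ⟨iff_of_false this.not_lt h.not_lt, iff_of_true this h, iff_of_false this.not_gt h.not_gt⟩
  · have := hgt h
    exact ⟨iff_of_false this.not_gt h.not_gt, iff_of_false this.ne' h.ne', iff_of_true this h⟩

section specRad

variable {p : ℕ} {A : Matrix (Fin p) (Fin p) ℝ}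

theorem specRad_eq_sSup_image : specRad A = sSup (norm '' spectrum ℂ (A.map Complex.ofReal)) := rfl

theorem norm_le_specRad {z : ℂ} (hz : z ∈ spectrum ℂ (A.map Complex.ofReal)) : ‖z‖ ≤ specRad A :=
  le_csSup ((A.map _).finite_spectrum.image norm).bddAbove ⟨z, hz, rfl⟩

theorem specRad_le {a : ℝ} (ha : 0 ≤ a) (h : ∀ z ∈ spectrum ℂ (A.map Complex.ofReal), ‖z‖ ≤ a) :
    specRad A ≤ a :=
  Real.sSup_le (by rintro _ ⟨z, hz, rfl⟩; exact h z hz) ha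

theorem specRad_lt {a : ℝ} (ha : 0 < a) (h : ∀ z ∈ spectrum ℂ (A.map Complex.ofReal), ‖z‖ < a) :
    specRad A < a := by
  rw [specRad_eq_sSup_image]
  rcases (spectrum ℂ (A.map Complex.ofReal)).eq_empty_or_nonempty with hempty | hne
  · simpa [hempty] using ha
  · exact ((A.map _).finite_spectrum.image norm).csSup_lt_iff (hne.image _) |>.2 <|
      Set.forall_mem_image.2 h

end specRad

section companion

variable {n : ℕ} (α : Fin (n + 1) → ℝ) (v : Fin (n + 1) → ℂ)

theorem companion_map_mulVec_zero :
    ((companion (n + 1) α).map Complex.ofReal *ᵥ v) 0 = ∑ j, (α j : ℂ) * v j := by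
  simp [mulVec, dotProduct, companion]

theorem companion_map_mulVec_succ (i : Fin n) :
    ((companion (n + 1) α).map Complex.ofReal *ᵥ v) i.succ = v i.castSucc := by
  rw [mulVec, dotProduct, Finset.sum_eq_single i.castSucc]
  · simp [companion]
  · intro j _ hj
    have : (i : ℕ) ≠ j := fun h => hj (Fin.ext h.symm)
    simp [companion, this]
  · simp

theorem companion_map_mulVec_eq_smul_iff (z : ℂ) :
    (companion (n + 1) α).map Complex.ofReal *ᵥ v = z • v ↔
      ∑ j, (α j : ℂ) * v j = z * v 0 ∧ ∀ i : Fin n, v i.castSucc = z * v i.succ := by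
  simp [funext_iff, Fin.forall_fin_succ, companion_map_mulVec_zero, companion_map_mulVec_succ]

end companion

theorem Fin.eq_pow_mul_last {K : Type*} [Monoid K] {n : ℕ} {v : Fin (n + 1) → K} {z : K}
    (h : ∀ i : Fin n, v i.castSucc = z * v i.succ) (i : Fin (n + 1)) :
    v i = z ^ (n - i) * v (Fin.last n) := by
  induction i using Fin.reverseInduction with
  | last => simp
  | cast i ih =>
    rw [h, ih, ← mul_assoc, ← pow_succ']
    congr 2
    simp only [Fin.val_succ, Fin.val_castSucc]
    omega

theorem mem_spectrum_companion_iff (p : ℕ) (α : Fin p → ℝ) (z : ℂ) :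
    z ∈ spectrum ℂ ((companion p α).map Complex.ofReal) ↔
      z ^ p = ∑ k, (α k : ℂ) * z ^ (p - 1 - k) := by
  cases p with
  | zero => simp [spectrum.of_subsingleton]
  | succ n =>
    simp only [Nat.add_sub_cancel, mem_spectrum_iff_exists_mulVec_eq_smul,
      companion_map_mulVec_eq_smul_iff]
    constructor
    · rintro ⟨v, hv, hrow, hshift⟩
      obtain ⟨c, rfl⟩ : ∃ c, v = fun i : Fin (n + 1) => z ^ (n - i) * c :=
        ⟨_, funext (Fin.eq_pow_mul_last hshift)⟩
      have hc : c ≠ 0 := by rintro rfl; exact hv (funext fun _ => mul_zero _)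
      apply mul_right_cancel₀ hc
      simpa [← mul_assoc, ← Finset.sum_mul, ← pow_succ'] using hrow.symm
    · intro h
      refine ⟨fun i => z ^ (n - i), fun h0 => by simpa using congrFun h0 (Fin.last n), ?_,
        fun i => ?_⟩
      · simp only [Fin.val_zero, Nat.sub_zero, ← pow_succ', h]
      · simp only [Fin.val_castSucc, Fin.val_succ, ← pow_succ']
        congr 1
        omega

section weights

variable {p : ℕ} {α : Fin p → ℝ}

theorem sum_mul_pow_le (hα : ∀ k, 0 ≤ α k) {t : ℝ} (ht : 1 ≤ t) :
    ∑ k, α k * t ^ (p - 1 - k) ≤ (∑ k, α k) * t ^ (p - 1) := by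
  rw [Finset.sum_mul]
  exact Finset.sum_le_sum fun k _ =>
    mul_le_mul_of_nonneg_left (pow_le_pow_right₀ ht (Nat.sub_le _ _)) (hα k)

theorem norm_le_sum_of_eq_sum_mul_pow (hα : ∀ k, 0 ≤ α k) {z : ℂ}
    (hz : z ^ p = ∑ k, (α k : ℂ) * z ^ (p - 1 - k)) (h1 : 1 ≤ ‖z‖) : ‖z‖ ≤ ∑ k, α k := by
  have hle : ‖z‖ ^ p ≤ (∑ k, α k) * ‖z‖ ^ (p - 1) :=
    calc ‖z‖ ^ p = ‖∑ k, (α k : ℂ) * z ^ (p - 1 - k)‖ := by rw [← norm_pow, hz]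
      _ ≤ ∑ k, α k * ‖z‖ ^ (p - 1 - k) := by
        refine (norm_sum_le _ _).trans_eq (Finset.sum_congr rfl fun k _ => ?_)
        rw [norm_mul, norm_pow, Complex.norm_real, Real.norm_of_nonneg (hα k)]
      _ ≤ (∑ k, α k) * ‖z‖ ^ (p - 1) := sum_mul_pow_le hα h1
  cases p with
  | zero => simp at hz
  | succ n =>
    rw [pow_succ', Nat.add_sub_cancel] at hle
    exact le_of_mul_le_mul_right hle (by positivity)

theorem exists_one_lt_eq_sum_mul_pow (hα : ∀ k, 0 ≤ α k) (hS : 1 < ∑ k, α k) :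
    ∃ r : ℝ, 1 < r ∧ r ^ p = ∑ k, α k * r ^ (p - 1 - k) := by
  set S := ∑ k, α k
  have hp : p ≠ 0 := by rintro rfl; norm_num [S] at hS
  set f : ℝ → ℝ := fun t => t ^ p - ∑ k, α k * t ^ (p - 1 - k)
  have hf1 : f 1 < 0 := by simp only [f, one_pow, mul_one]; linarith
  have hfS : 0 ≤ f S := by
    have := sum_mul_pow_le hα hS.le
    rw [← pow_succ', Nat.sub_add_cancel (Nat.one_le_iff_ne_zero.2 hp)] at this
    simp only [f]; linarith
  obtain ⟨r, ⟨hr1, -⟩, hr⟩ := intermediate_value_Ioc hS.le (by fun_prop) ⟨hf1, hfS⟩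
  exact ⟨r, hr1, sub_eq_zero.1 hr⟩

end weights

/-- `ρ(A) < 1 ↔ Σ α_k < 1`, `ρ(A) = 1 ↔ Σ α_k = 1`, `ρ(A) > 1 ↔ Σ α_k > 1`. -/
theorem specRad_trichotomy
    (p : ℕ) (α : Fin p → ℝ)
    (hα : ∀ i, α i ∈ Set.Icc (0 : ℝ) 1) :
    (specRad (companion p α) < 1 ↔ ∑ k : Fin p, α k < 1) ∧
    (specRad (companion p α) = 1 ↔ ∑ k : Fin p, α k = 1) ∧
    (1 < specRad (companion p α) ↔ 1 < ∑ k : Fin p, α k) := by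
  have hα₀ k : 0 ≤ α k := (hα k).1
  have hspec z := mem_spectrum_companion_iff p α z
  have hbound z (hz : z ∈ spectrum ℂ ((companion p α).map Complex.ofReal)) (h1 : 1 ≤ ‖z‖) :
      ‖z‖ ≤ ∑ k, α k :=
    norm_le_sum_of_eq_sum_mul_pow hα₀ ((hspec z).1 hz) h1
  refine trichotomy_iffs (fun hS => ?_) (fun hS => ?_) (fun hS => ?_)
  · exact specRad_lt one_pos fun z hz => not_le.1 fun h1 => by linarith [hbound z hz h1]
  · refine le_antisymm (specRad_le zero_le_one fun z hz => ?_) ?_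
    · exact not_lt.1 fun h1 => by linarith [hbound z hz h1.le]
    · simpa using norm_le_specRad ((hspec 1).2 (by simp [← Complex.ofReal_sum, hS]))
  · obtain ⟨r, hr1, hr⟩ := exists_one_lt_eq_sum_mul_pow hα₀ hS
    have hmem := (hspec r).2 (by exact_mod_cast hr)
    exact hr1.trans_le (by simpa [abs_of_pos (zero_lt_one.trans hr1)] using norm_le_specRad hmem)

end
end

section
/- Let p ≥ 1 and α_1,…,α_p ∈ [0,1] with α_p > 0, and suppose the greatest common divisor of the set {i ∈ {1,…,p} : α_i > 0} equals 1. Then the associated p×p companion matrix A is primitive: there exists k ∈ ℕ such that every entry of A^k is strictly positive. -/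
/-!
In the graph of the companion matrix, index `0` has an edge to every `i` with `0 < α i`, and each
`i + 1` has an edge to `i`. Hence `0` lies on a closed walk of length `i + 1` whenever `0 < α i`;
as these lengths have gcd one, it lies on closed walks of all large lengths. Every index reaches
`0` by walking down, and is reached from `0` through the edge `0 → p - 1` (present because
`α_p > 0`), so padding with a closed walk at `0` gives walks of one common length between any two
indices.
-/

open Matrix

noncomputable section

lemma Nat.setGcd_image_dvd_finset_gcd {ι : Type*} (s : Finset ι) (f : ι → ℕ) :
    Nat.setGcd (f '' s) ∣ s.gcd f :=
  Finset.dvd_gcd fun i hi => Nat.setGcd_dvd_of_mem ⟨i, hi, rfl⟩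

namespace Matrix

variable {n R : Type*} [Fintype n] [DecidableEq n] [Ring R] [LinearOrder R]
  [IsStrictOrderedRing R] {A : Matrix n n R}

lemma pow_add_apply_pos (hA : ∀ i j, 0 ≤ A i j) {a b : ℕ} {i j l : n}
    (h₁ : 0 < (A ^ a) i j) (h₂ : 0 < (A ^ b) j l) : 0 < (A ^ (a + b)) i l := by
  rw [pow_add, mul_apply]
  exact Finset.sum_pos' (fun t _ => mul_nonneg (pow_apply_nonneg hA a i t)
    (pow_apply_nonneg hA b t l)) ⟨j, Finset.mem_univ j, mul_pos h₁ h₂⟩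

lemma pow_apply_self_pos_of_mem_closure (hA : ∀ i j, 0 ≤ A i j) {S : Set ℕ} {r : n}
    (hS : ∀ s ∈ S, 0 < (A ^ s) r r) {k : ℕ} (hk : k ∈ AddSubmonoid.closure S) :
    0 < (A ^ k) r r := by
  induction hk using AddSubmonoid.closure_induction with
  | mem s hs => exact hS s hs
  | zero => simp
  | add a b _ _ ha hb => exact pow_add_apply_pos hA ha hb

theorem isPrimitive_of_setGcd_eq_one (hA : ∀ i j, 0 ≤ A i j) (r : n) (S : Set ℕ)
    (hgcd : Nat.setGcd S = 1) (hloop : ∀ s ∈ S, 0 < (A ^ s) r r)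
    (hto : ∀ i, ∃ a, 0 < (A ^ a) i r) (hfrom : ∀ j, ∃ b, 0 < (A ^ b) r j) :
    A.IsPrimitive := by
  choose a ha using hto
  choose b hb using hfrom
  obtain ⟨N, hN⟩ := Nat.exists_mem_closure_of_ge S
  set D := Finset.univ.sup a + Finset.univ.sup b
  refine ⟨hA, N + D + 1, by omega, fun i j => ?_⟩
  have hai : a i ≤ Finset.univ.sup a := Finset.le_sup (Finset.mem_univ i)
  have hbj : b j ≤ Finset.univ.sup b := Finset.le_sup (Finset.mem_univ j)
  set m := N + D + 1 - a i - b j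
  have hm : 0 < (A ^ m) r r :=
    pow_apply_self_pos_of_mem_closure hA hloop (hN m (by omega) (by simp [hgcd]))
  have := pow_add_apply_pos hA (pow_add_apply_pos hA (ha i) hm) (hb j)
  rwa [show a i + m + b j = N + D + 1 by omega] at this

end Matrix

section Companion

variable {p : ℕ} {α : Fin p → ℝ}

lemma companion_apply_of_eq_zero {i : Fin p} (hi : (i : ℕ) = 0) (j : Fin p) :
    companion p α i j = α j := by
  simp [companion, hi]

lemma companion_apply_of_eq_succ {i j : Fin p} (h : (i : ℕ) = j + 1) :
    companion p α i j = 1 := by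
  simp [companion, h]

lemma companion_nonneg (hα : ∀ i, 0 ≤ α i) (i j : Fin p) : 0 ≤ companion p α i j := by
  simp only [companion, of_apply]
  split_ifs
  exacts [hα j, zero_le_one, le_rfl]

lemma companion_pow_apply_pos_of_eq_add (hα : ∀ i, 0 ≤ α i) {m : ℕ} {i j : Fin p}
    (h : (i : ℕ) = j + m) : 0 < (companion p α ^ m) i j := by
  induction m generalizing i with
  | zero => simp [Fin.ext (by omega : (i : ℕ) = j)]
  | succ m ih =>
    let i' : Fin p := ⟨j + m, by omega⟩
    have hstep : 0 < (companion p α ^ 1) i i' := by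
      rw [pow_one, companion_apply_of_eq_succ (by simp [i']; omega)]
      exact one_pos
    rw [add_comm m]
    exact pow_add_apply_pos (companion_nonneg hα) hstep (ih rfl)

theorem companion_isPrimitive (hp : 0 < p) (hα : ∀ i, 0 ≤ α i)
    (hαp : 0 < α ⟨p - 1, Nat.sub_one_lt_of_lt hp⟩)
    (hgcd : (Finset.univ.filter fun i : Fin p => 0 < α i).gcd (fun i => (i : ℕ) + 1) = 1) :
    (companion p α).IsPrimitive := by
  have hA := companion_nonneg hα
  let r : Fin p := ⟨0, hp⟩
  have hfirst : ∀ j, 0 < α j → 0 < (companion p α ^ 1) r j := fun j hj => by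
    rwa [pow_one, companion_apply_of_eq_zero rfl]
  refine isPrimitive_of_setGcd_eq_one hA r _
    (Nat.dvd_one.mp (hgcd ▸ Nat.setGcd_image_dvd_finset_gcd _ _)) ?_
    (fun i => ⟨i, companion_pow_apply_pos_of_eq_add hα (by simp [r])⟩)
    (fun j => ⟨1 + (p - 1 - j), pow_add_apply_pos hA (hfirst _ hαp)
      (companion_pow_apply_pos_of_eq_add hα (by simp; omega))⟩)
  rintro _ ⟨i, hi, rfl⟩
  show 0 < (companion p α ^ ((i : ℕ) + 1)) r r
  rw [add_comm]
  exact pow_add_apply_pos hA (hfirst i (Finset.mem_filter.mp hi).2)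
    (companion_pow_apply_pos_of_eq_add hα (by simp [r]))

end Companion

/-- if `α_p > 0` and the gcd of `{i : α_i > 0}` (with `1`-based indices)
equals `1`, then the companion matrix is primitive: some power has all entries positive. -/
theorem companion_primitive
    (p : ℕ) (hp : 0 < p) (α : Fin p → ℝ)
    (hα : ∀ i, α i ∈ Set.Icc (0 : ℝ) 1)
    (hαp : 0 < α ⟨p - 1, by omega⟩)
    (hgcd : (Finset.univ.filter fun i : Fin p => 0 < α i).gcd
        (fun i => (i : ℕ) + 1) = 1) :
    ∃ k : ℕ, 0 < k ∧ ∀ i j : Fin p, 0 < (companion p α ^ k) i j :=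
  (companion_isPrimitive hp (fun i => (hα i).1) hαp hgcd).exists_pos_pow

end
end
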